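/- Graph reducibility in terms of cut weights is equivalent to graph reducibility in terms of Lovász extensions: for a submodular hypergraph H on vertex set V (|V| = N) with cut function cut_H(S) = Σ_e w_e(S) and a directed graph G on V ∪ V̄ (|V̄| = M) with non-negative adjacency weights A and cut function cut_G(S) = Σ_{u∈S, v∉S} A_{uv}, the condition cut_H(S) = min_{T⊆V̄} cut_G(S∪T) for all S ⊆ V holds if and only if Q_1(x) = min_{x̄∈ℝ^M} Q_1^{(g)}(x, x̄) for all x ∈ ℝ^N, where Q_1 is the Lovász extension of cut_H and Q_1^{(g)}(y) = Σ_{u,v} A_{uv} max{y_u − y_v, 0}. -/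

import Mathlib

open scoped Classical
open MeasureTheory

/-- The Lovász extension of a set function `F` (with `F ∅ = 0`), defined equivalently to the
sorted telescoping sum via the level-set integral formula. -/
noncomputable def lovasz {α : Type*} [Fintype α] (F : Set α → ℝ) (x : α → ℝ) : ℝ :=
  (⨅ i, x i) * F Set.univ +
    ∫ t in Set.Ioc (⨅ i, x i) (⨆ i, x i), F {i | t < x i}

/-- `F(S₁) + F(S₂) ≥ F(S₁ ∪ S₂) + F(S₁ ∩ S₂)`. -/
def Submodular {α : Type*} (F : Set α → ℝ) : Prop :=
  ∀ A B : Set α, F (A ∪ B) + F (A ∩ B) ≤ F A + F B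

/-!
Both sides are level-set integrals. The Lovász extension is `∫ F {x > t} dt` as soon as
`F univ = 0` (for `cut_H` this is the symmetry of the splitting functions), and by the coarea
formula `Q₁⁽ᵍ⁾ y = ∫ cut_G {y > t} dt` over any interval containing the values of `y`, with `≥`
over any set of thresholds. If `cut_H` is the partial minimum of `cut_G`, comparing integrands gives
`Q₁ x ≤ Q₁⁽ᵍ⁾ (x, x̄)`. For equality, submodularity of `cut_G` makes the least minimizer `M S` of
`T ↦ cut_G (S ∪ T)` monotone in `S`, so `t ↦ M {x > t}` is the family of superlevel sets of a
single `x̄`, which attains `Q₁ x`. Conversely, on indicator vectors the Lovász extension returns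
`cut_H S` and `Q₁⁽ᵍ⁾` returns `cut_G`, while the coarea inequality over `t ∈ (0, 1)` bounds
`Q₁⁽ᵍ⁾ (1_S, x̄)` below by `min_T cut_G (S ∪ T)`.
-/

open Set

section

variable {α β γ : Type*}

lemma measurable_comp_setOf_lt [Fintype α] (F : Set α → ℝ) (y : α → ℝ) :
    Measurable fun t : ℝ => F {i | t < y i} :=
  Measurable.of_discrete.comp (by fun_prop)

lemma integrableOn_comp_setOf_lt [Fintype α] (F : Set α → ℝ) (y : α → ℝ) {s : Set ℝ}
    (hs : volume s ≠ ⊤) : IntegrableOn (fun t : ℝ => F {i | t < y i}) s := by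
  obtain ⟨M, hM⟩ := (finite_range fun S => ‖F S‖).bddAbove
  exact Measure.integrableOn_of_bounded hs (measurable_comp_setOf_lt F y).aestronglyMeasurable
    (Filter.Eventually.of_forall fun t => hM ⟨_, rfl⟩)

lemma setOf_lt_indicator_one {S : Set α} {t : ℝ} (ht : t ∈ Ioo 0 1) :
    {i | t < S.indicator 1 i} = S := by
  ext i
  by_cases hi : i ∈ S <;> simp [hi, ht.2, ht.1.le]

lemma setOf_lt_sumElim (x : α → ℝ) (z : β → ℝ) (t : ℝ) :
    {i | t < Sum.elim x z i} = Sum.inl '' {a | t < x a} ∪ Sum.inr '' {b | t < z b} :=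
  preimage_sumElim (Ioi t) x z

lemma indicator_one_image_inl_union_image_inr (S : Set α) (T : Set β) :
    (Sum.inl '' S ∪ Sum.inr '' T).indicator (1 : α ⊕ β → ℝ) =
      Sum.elim (S.indicator 1) (T.indicator 1) := by
  ext (a | b) <;> simp [indicator_apply]

lemma lovasz_eq_setIntegral [Fintype α] {F : Set α → ℝ} (hF : F univ = 0) (x : α → ℝ) :
    lovasz F x = ∫ t in Ioc (⨅ i, x i) (⨆ i, x i), F {i | t < x i} := by
  simp [lovasz, hF]

lemma lovasz_indicator_one [Fintype α] {F : Set α → ℝ} (h0 : F ∅ = 0) (hu : F univ = 0)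
    (S : Set α) : lovasz F (S.indicator 1) = F S := by
  rw [lovasz_eq_setIntegral hu]
  by_cases htriv : S = ∅ ∨ S = univ
  · have hlevel : ∀ t : ℝ, F {i | t < S.indicator 1 i} = 0 := by
      intro t
      rcases htriv with rfl | rfl <;> by_cases ht : t < 0 <;> by_cases ht' : t < 1 <;>
        simp [ht, ht', h0, hu]
    rw [setIntegral_congr_fun measurableSet_Ioc fun t _ => hlevel t, integral_zero]
    rcases htriv with rfl | rfl <;> simp [h0, hu]
  obtain ⟨hne, hnu⟩ := not_or.1 htriv
  obtain ⟨a₁, ha₁⟩ := nonempty_iff_ne_empty.2 hne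
  obtain ⟨a₀, ha₀⟩ := (ne_univ_iff_exists_notMem S).1 hnu
  have hinf : ⨅ i, S.indicator (1 : α → ℝ) i = 0 :=
    le_antisymm ((ciInf_le (finite_range _).bddBelow a₀).trans_eq (indicator_of_notMem ha₀ _))
      (Real.iInf_nonneg fun i => indicator_nonneg (fun _ _ => zero_le_one) i)
  have hsup : ⨆ i, S.indicator (1 : α → ℝ) i = 1 :=
    le_antisymm (Real.iSup_le (fun i => indicator_le_self' (fun _ _ => zero_le_one) i) zero_le_one)
      ((indicator_of_mem ha₁ (1 : α → ℝ)).symm.trans_le (le_ciSup (finite_range _).bddAbove a₁))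
  rw [hinf, hsup, integral_Ioc_eq_integral_Ioo,
    setIntegral_congr_fun measurableSet_Ioo fun t ht => by rw [setOf_lt_indicator_one ht]]
  simp

section Graph

variable [Fintype γ] (A : γ → γ → ℝ)

noncomputable def graphCut (U : Set γ) : ℝ :=
  ∑ u, ∑ v, if u ∈ U ∧ v ∉ U then A u v else 0

noncomputable def graphLovasz (y : γ → ℝ) : ℝ :=
  ∑ u, ∑ v, A u v * max (y u - y v) 0

variable {A}

lemma graphCut_nonneg (hA : ∀ u v, 0 ≤ A u v) (U : Set γ) : 0 ≤ graphCut A U :=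
  Finset.sum_nonneg fun u _ => Finset.sum_nonneg fun v _ => by split_ifs <;> simp [hA u v]

lemma graphLovasz_nonneg (hA : ∀ u v, 0 ≤ A u v) (y : γ → ℝ) : 0 ≤ graphLovasz A y :=
  Finset.sum_nonneg fun u _ => Finset.sum_nonneg fun v _ => mul_nonneg (hA u v) (le_max_right _ _)

lemma graphCut_submodular (hA : ∀ u v, 0 ≤ A u v) : Submodular (graphCut A) := by
  intro U V
  simp only [graphCut, ← Finset.sum_add_distrib]
  refine Finset.sum_le_sum fun u _ => Finset.sum_le_sum fun v _ => ?_
  by_cases hu : u ∈ U <;> by_cases hu' : u ∈ V <;> by_cases hv : v ∈ U <;> by_cases hv' : v ∈ V <;>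
    simp [hu, hu', hv, hv', hA u v]

lemma graphLovasz_indicator_one (U : Set γ) : graphLovasz A (U.indicator 1) = graphCut A U := by
  refine Finset.sum_congr rfl fun u _ => Finset.sum_congr rfl fun v _ => ?_
  by_cases hu : u ∈ U <;> by_cases hv : v ∈ U <;> simp [hu, hv]

lemma graphCut_setOf_lt (y : γ → ℝ) (t : ℝ) :
    graphCut A {i | t < y i} = ∑ u, ∑ v, A u v * (Ico (y v) (y u)).indicator 1 t := by
  refine Finset.sum_congr rfl fun u _ => Finset.sum_congr rfl fun v _ => ?_
  by_cases h : y v ≤ t ∧ t < y u <;> simp [h, and_comm, not_lt]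

lemma setIntegral_graphCut_setOf_lt (y : γ → ℝ) (s : Set ℝ) :
    ∫ t in s, graphCut A {i | t < y i} =
      ∑ u, ∑ v, A u v * volume.real (Ico (y v) (y u) ∩ s) := by
  have hint : ∀ a b : ℝ, Integrable ((Ico a b).indicator (1 : ℝ → ℝ)) (volume.restrict s) :=
    fun a b => ((integrable_indicator_iff measurableSet_Ico).2
      (integrableOn_const measure_Ico_lt_top.ne)).restrict
  simp_rw [graphCut_setOf_lt]
  rw [integral_finsetSum _ fun u _ => integrable_finsetSum _ fun v _ => (hint _ _).const_mul _]
  refine Finset.sum_congr rfl fun u _ => ?_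
  rw [integral_finsetSum _ fun v _ => (hint _ _).const_mul _]
  refine Finset.sum_congr rfl fun v _ => ?_
  rw [integral_const_mul, integral_indicator_one measurableSet_Ico,
    measureReal_restrict_apply measurableSet_Ico]

lemma setIntegral_graphCut_le_graphLovasz (hA : ∀ u v, 0 ≤ A u v) (y : γ → ℝ) (s : Set ℝ) :
    ∫ t in s, graphCut A {i | t < y i} ≤ graphLovasz A y := by
  rw [setIntegral_graphCut_setOf_lt y s]
  refine Finset.sum_le_sum fun u _ => Finset.sum_le_sum fun v _ => ?_
  refine mul_le_mul_of_nonneg_left ?_ (hA u v)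
  exact (measureReal_mono inter_subset_left measure_Ico_lt_top.ne).trans_eq Real.volume_real_Ico

lemma volume_real_Ico_inter_Ioc {a b c d : ℝ} (hca : c ≤ a) (hbd : b ≤ d) :
    volume.real (Ico a b ∩ Ioc c d) = max (b - a) 0 :=
  le_antisymm
    ((measureReal_mono inter_subset_left measure_Ico_lt_top.ne).trans_eq Real.volume_real_Ico)
    (Real.volume_real_Ioo.symm.trans_le (measureReal_mono
      (fun _ ht => ⟨Ioo_subset_Ico_self ht, hca.trans_lt ht.1, ht.2.le.trans hbd⟩)
      (measure_inter_lt_top_of_right_ne_top measure_Ioc_lt_top.ne).ne))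

/-- The coarea formula for the graph Lovász extension. -/
lemma graphLovasz_eq_setIntegral (y : γ → ℝ) {c d : ℝ} (hy : ∀ i, y i ∈ Icc c d) :
    graphLovasz A y = ∫ t in Ioc c d, graphCut A {i | t < y i} := by
  rw [setIntegral_graphCut_setOf_lt y (Ioc c d)]
  refine Finset.sum_congr rfl fun u _ => Finset.sum_congr rfl fun v _ => ?_
  rw [volume_real_Ico_inter_Ioc (hy v).1 (hy u).2]

end Graph

lemma exists_isLeast_setOf_isMin [Finite β] {g : Set β → ℝ} (hg : Submodular g) :
    ∃ T₀, IsLeast {T | ∀ T', g T ≤ g T'} T₀ := by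
  obtain ⟨T₁, hT₁⟩ := Finite.exists_min g
  have : Nonempty {T : Set β // ∀ T', g T ≤ g T'} := ⟨⟨T₁, hT₁⟩⟩
  obtain ⟨⟨T₀, hT₀⟩, hcard⟩ :=
    Finite.exists_min fun T : {T : Set β // ∀ T', g T ≤ g T'} => T.1.ncard
  refine ⟨T₀, hT₀, fun T hT => ?_⟩
  -- Submodularity makes `T₀ ∩ T` a minimizer as well, and it is no larger than `T₀`.
  have hinter : ∀ T', g (T₀ ∩ T) ≤ g T' := fun T' => by
    linarith [hg T₀ T, hT (T₀ ∪ T), hT₀ T']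
  have heq : T₀ ∩ T = T₀ :=
    eq_of_subset_of_ncard_le inter_subset_left (hcard ⟨_, hinter⟩) (toFinite _)
  exact heq ▸ inter_subset_right

/-- `M S` is the least minimizer of `g S`. -/
lemma exists_monotone_isMin [Finite β] (g : Set α → Set β → ℝ)
    (hg : ∀ S S' T T', g (S ∪ S') (T ∪ T') + g (S ∩ S') (T ∩ T') ≤ g S T + g S' T') :
    ∃ M : Set α → Set β, Monotone M ∧ ∀ S T, g S (M S) ≤ g S T := by
  choose M hM using fun S => exists_isLeast_setOf_isMin (g := g S) fun T T' => by
    simpa using hg S S T T'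
  refine ⟨M, fun S S' hSS' => ?_, fun S => (hM S).1⟩
  have hinter : ∀ T, g S (M S' ∩ M S) ≤ g S T := fun T => by
    have := hg S' S (M S') (M S)
    rw [union_eq_left.2 hSS', inter_eq_right.2 hSS'] at this
    linarith [(hM S').1 (M S' ∪ M S), (hM S).1 T]
  exact ((hM S).2 hinter).trans inter_subset_left

lemma exists_setOf_le_eq_setOf_lt [Fintype α] [Nonempty α] (x : α → ℝ) {t : ℝ}
    (ht : t < ⨆ a, x a) : ∃ a, t < x a ∧ {a' | x a ≤ x a'} = {a' | t < x a'} := by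
  obtain ⟨a₀, ha₀⟩ := exists_lt_of_lt_ciSup ht
  obtain ⟨a, ha, hmin⟩ := Finset.exists_min_image (Finset.univ.filter fun a => t < x a) x
    ⟨a₀, by simpa using ha₀⟩
  rw [Finset.mem_filter] at ha
  refine ⟨a, ha.2, Set.ext fun a' => ⟨fun h => ha.2.trans_le h, fun h => hmin a' ?_⟩⟩
  simpa using h

lemma exists_setOf_lt_eq_of_monotone [Fintype α] (x : α → ℝ) {M : Set α → Set β}
    (hM : Monotone M) :
    ∃ z : β → ℝ, (∀ b, z b ∈ Icc (⨅ a, x a) (⨆ a, x a)) ∧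
      ∀ t ∈ Ico (⨅ a, x a) (⨆ a, x a), {b | t < z b} = M {a | t < x a} := by
  rcases isEmpty_or_nonempty α with hα | hα
  · exact ⟨0, by simp [Real.iInf_of_isEmpty, Real.iSup_of_isEmpty]⟩
  set c := ⨅ a, x a
  set d := ⨆ a, x a
  have hc : ∀ a, c ≤ x a := ciInf_le (finite_range x).bddBelow
  have hd : ∀ a, x a ≤ d := le_ciSup (finite_range x).bddAbove
  -- `z b` is the largest value `x a` with `b ∈ M {x ≥ x a}`, or `c` if there is none.
  let f : β → α → ℝ := fun b a => if b ∈ M {a' | x a ≤ x a'} then x a else c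
  have hf : ∀ b a, f b a ∈ Icc c d := fun b a => by
    dsimp only [f]
    split_ifs
    exacts [⟨hc a, hd a⟩, ⟨le_rfl, (hc a).trans (hd a)⟩]
  refine ⟨fun b => ⨆ a, f b a, fun b => ⟨?_, ciSup_le fun a => (hf b a).2⟩, fun t ht => ?_⟩
  · obtain ⟨a⟩ := hα
    exact (hf b a).1.trans (le_ciSup (finite_range _).bddAbove a)
  ext b
  simp only [mem_ofPred_eq, lt_ciSup_iff (finite_range _).bddAbove]
  constructor
  · rintro ⟨a, ha⟩
    dsimp only [f] at ha
    split_ifs at ha with hb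
    · exact hM (fun a' h => ha.trans_le h) hb
    · exact absurd ha ht.1.not_gt
  · intro hb
    obtain ⟨a, hta, heq⟩ := exists_setOf_le_eq_setOf_lt x ht.2
    refine ⟨a, ?_⟩
    simpa only [f, heq, if_pos hb] using hta

section Reduction

variable [Fintype α] [Fintype β]

def CutReduces (F : Set α → ℝ) (A : α ⊕ β → α ⊕ β → ℝ) : Prop :=
  ∀ S : Set α, F S = ⨅ T : Set β, graphCut A (Sum.inl '' S ∪ Sum.inr '' T)

def LovaszReduces (F : Set α → ℝ) (A : α ⊕ β → α ⊕ β → ℝ) : Prop :=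
  ∀ x : α → ℝ, lovasz F x = ⨅ z : β → ℝ, graphLovasz A (Sum.elim x z)

variable {F : Set α → ℝ} {A : α ⊕ β → α ⊕ β → ℝ}

lemma graphCut_glue_submodular (hA : ∀ u v, 0 ≤ A u v) (S S' : Set α) (T T' : Set β) :
    graphCut A (Sum.inl '' (S ∪ S') ∪ Sum.inr '' (T ∪ T')) +
        graphCut A (Sum.inl '' (S ∩ S') ∪ Sum.inr '' (T ∩ T')) ≤
      graphCut A (Sum.inl '' S ∪ Sum.inr '' T) + graphCut A (Sum.inl '' S' ∪ Sum.inr '' T') := by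
  convert graphCut_submodular hA (sumEquiv.symm (S, T)) (sumEquiv.symm (S', T')) using 3
  exacts [sumEquiv.symm.map_sup (S, T) (S', T'), sumEquiv.symm.map_inf (S, T) (S', T'), rfl, rfl]

lemma bddBelow_range_graphCut (hA : ∀ u v, 0 ≤ A u v) (S : Set α) :
    BddBelow (range fun T : Set β => graphCut A (Sum.inl '' S ∪ Sum.inr '' T)) :=
  ⟨0, forall_mem_range.2 fun _ => graphCut_nonneg hA _⟩

lemma bddBelow_range_graphLovasz (hA : ∀ u v, 0 ≤ A u v) (x : α → ℝ) :
    BddBelow (range fun z : β → ℝ => graphLovasz A (Sum.elim x z)) :=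
  ⟨0, forall_mem_range.2 fun _ => graphLovasz_nonneg hA _⟩

lemma CutReduces.lovasz_le (hA : ∀ u v, 0 ≤ A u v) (hu : F univ = 0) (h : CutReduces F A)
    (x : α → ℝ) (z : β → ℝ) : lovasz F x ≤ graphLovasz A (Sum.elim x z) := by
  rw [lovasz_eq_setIntegral hu]
  refine (setIntegral_mono_on (integrableOn_comp_setOf_lt F x measure_Ioc_lt_top.ne)
    (integrableOn_comp_setOf_lt _ _ measure_Ioc_lt_top.ne) measurableSet_Ioc fun t _ => ?_).trans
    (setIntegral_graphCut_le_graphLovasz hA _ _)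
  rw [h, setOf_lt_sumElim]
  exact ciInf_le (bddBelow_range_graphCut hA _) _

lemma CutReduces.exists_graphLovasz_eq (hA : ∀ u v, 0 ≤ A u v) (hu : F univ = 0)
    (h : CutReduces F A) (x : α → ℝ) : ∃ z : β → ℝ, graphLovasz A (Sum.elim x z) = lovasz F x := by
  obtain ⟨M, hMmono, hMmin⟩ := exists_monotone_isMin
    (fun S T => graphCut A (Sum.inl '' S ∪ Sum.inr '' T)) (graphCut_glue_submodular hA)
  obtain ⟨z, hz, hzlevel⟩ := exists_setOf_lt_eq_of_monotone x hMmono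
  have hrange : ∀ i, Sum.elim x z i ∈ Icc (⨅ a, x a) (⨆ a, x a) := by
    rintro (a | b)
    exacts [⟨ciInf_le (finite_range x).bddBelow a, le_ciSup (finite_range x).bddAbove a⟩, hz b]
  refine ⟨z, ?_⟩
  rw [graphLovasz_eq_setIntegral _ hrange, lovasz_eq_setIntegral hu, integral_Ioc_eq_integral_Ioo,
    integral_Ioc_eq_integral_Ioo]
  refine setIntegral_congr_fun measurableSet_Ioo fun t ht => ?_
  rw [setOf_lt_sumElim, hzlevel t (Ioo_subset_Ico_self ht), h]
  exact le_antisymm (le_ciInf (hMmin _)) (ciInf_le (bddBelow_range_graphCut hA _) _)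

lemma CutReduces.lovaszReduces (hA : ∀ u v, 0 ≤ A u v) (hu : F univ = 0) (h : CutReduces F A) :
    LovaszReduces F A := fun x => by
  obtain ⟨z, hz⟩ := h.exists_graphLovasz_eq hA hu x
  exact le_antisymm (le_ciInf (h.lovasz_le hA hu x))
    (hz ▸ ciInf_le (bddBelow_range_graphLovasz hA x) z)

lemma LovaszReduces.cutReduces (hA : ∀ u v, 0 ≤ A u v) (h0 : F ∅ = 0) (hu : F univ = 0)
    (h : LovaszReduces F A) : CutReduces F A := fun S => by
  rw [← lovasz_indicator_one h0 hu S, h]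
  apply le_antisymm
  · refine le_ciInf fun T => ?_
    rw [← graphLovasz_indicator_one, indicator_one_image_inl_union_image_inr]
    exact ciInf_le (bddBelow_range_graphLovasz hA _) _
  · refine le_ciInf fun z => ?_
    calc ⨅ T : Set β, graphCut A (Sum.inl '' S ∪ Sum.inr '' T)
        = ∫ _ in Ioo (0 : ℝ) 1, ⨅ T : Set β, graphCut A (Sum.inl '' S ∪ Sum.inr '' T) := by
          simp
      _ ≤ ∫ t in Ioo 0 1, graphCut A {i | t < Sum.elim (S.indicator 1) z i} :=
          setIntegral_mono_on (integrableOn_const measure_Ioo_lt_top.ne)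
            (integrableOn_comp_setOf_lt _ _ measure_Ioo_lt_top.ne) measurableSet_Ioo fun t ht => by
              rw [setOf_lt_sumElim, setOf_lt_indicator_one ht]
              exact ciInf_le (bddBelow_range_graphCut hA S) _
      _ ≤ graphLovasz A (Sum.elim (S.indicator 1) z) :=
          setIntegral_graphCut_le_graphLovasz hA _ _

theorem cutReduces_iff_lovaszReduces (hA : ∀ u v, 0 ≤ A u v) (h0 : F ∅ = 0) (hu : F univ = 0) :
    CutReduces F A ↔ LovaszReduces F A :=
  ⟨CutReduces.lovaszReduces hA hu, LovaszReduces.cutReduces hA h0 hu⟩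

end Reduction

end

theorem stmt_12_general {α β ι : Type*} [Fintype α] [Fintype β] [Fintype ι]
    (e : ι → Set α) (w : ι → Set α → ℝ)
    (h0 : ∀ i, w i ∅ = 0)
    (hrestr : ∀ i S, w i S = w i (S ∩ e i))
    (hsym : ∀ i, ∀ S ⊆ e i, w i S = w i (e i \ S))
    (A : (α ⊕ β) → (α ⊕ β) → ℝ) (hA : ∀ u v, 0 ≤ A u v) :
    let cutH : Set α → ℝ := fun S => ∑ i, w i S
    let cutG : Set (α ⊕ β) → ℝ := fun S => ∑ u, ∑ v, if u ∈ S ∧ v ∉ S then A u v else 0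
    let Q1g : ((α ⊕ β) → ℝ) → ℝ := fun y => ∑ u, ∑ v, A u v * max (y u - y v) 0
    ((∀ S : Set α, cutH S = ⨅ T : Set β, cutG (Sum.inl '' S ∪ Sum.inr '' T)) ↔
      (∀ x : α → ℝ, lovasz cutH x = ⨅ xb : β → ℝ, Q1g (Sum.elim x xb))) := by
  intro cutH _ _
  have hempty : cutH ∅ = 0 := Finset.sum_eq_zero fun i _ => h0 i
  have huniv : cutH univ = 0 := Finset.sum_eq_zero fun i _ => by
    rw [hrestr, univ_inter, hsym i _ subset_rfl, sdiff_self, h0]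
  exact cutReduces_iff_lovaszReduces hA hempty huniv

/-- Graph reducibility in terms of cut weights is equivalent to graph reducibility in terms of
Lovász extensions: for a submodular hypergraph on `α` with splitting functions `w i` and a
directed graph on `α ⊕ β` with non-negative weights `A`, the condition
`cut_H(S) = min_{T ⊆ V̄} cut_G(S ∪ T)` for all `S` holds iff
`Q₁(x) = min_{x̄} Q₁⁽ᵍ⁾(x, x̄)` for all `x`. -/
theorem stmt_12 {α β ι : Type*} [Fintype α] [Fintype β] [Fintype ι]
    (e : ι → Set α) (w : ι → Set α → ℝ)
    (hsub : ∀ i, Submodular (w i)) (h0 : ∀ i, w i ∅ = 0)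
    (hnn : ∀ i S, 0 ≤ w i S)
    (hrestr : ∀ i S, w i S = w i (S ∩ e i))
    (hsym : ∀ i, ∀ S ⊆ e i, w i S = w i (e i \ S))
    (A : (α ⊕ β) → (α ⊕ β) → ℝ) (hA : ∀ u v, 0 ≤ A u v) :
    let cutH : Set α → ℝ := fun S => ∑ i, w i S
    let cutG : Set (α ⊕ β) → ℝ := fun S => ∑ u, ∑ v, if u ∈ S ∧ v ∉ S then A u v else 0
    let Q1g : ((α ⊕ β) → ℝ) → ℝ := fun y => ∑ u, ∑ v, A u v * max (y u - y v) 0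
    ((∀ S : Set α, cutH S = ⨅ T : Set β, cutG (Sum.inl '' S ∪ Sum.inr '' T)) ↔
      (∀ x : α → ℝ, lovasz cutH x = ⨅ xb : β → ℝ, Q1g (Sum.elim x xb))) :=
  stmt_12_general e w h0 hrestr hsym A hA
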